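/- Let M_f = 0.019343 and define d^f on C ∪ F as the weighted shortest-path distance between blocks in the weighted graph whose vertices are the blocks {c,e}, {a,b}, {d,g}, {f}, B1 = {1,2,3}, B2 = {4,5,6}, {7}, with edges of weight M_f: f–B1, {c,e}–B1, {a,b}–B1, B2–{d,g}, B2–f, {a,b}–7, 7–f, and edges of weight 2·M_f: {c,e}–{d,g}, {a,b}–{d,g} (points in the same block are at distance 0). Then d^f is a pseudometric on C ∪ F, d^f is consistent with σ*, Σ_{j∈C} d^f(f,j) = 7·M_f > 0, and facility f minimizes Σ_{j∈C} d^f(o,j) over o ∈ F. -/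
import Mathlib

/-- Points of the instance: `Sum.inl j` is client `j`, `Sum.inr i` is facility `i`. -/
abbrev Pt := Fin 7 ⊕ Fin 7

/-- `d` is a pseudometric: nonnegative, symmetric, zero on the diagonal,
and satisfying the triangle inequality `d x y ≤ d x z + d y z`. -/
def IsPseudometric (d : Pt → Pt → ℝ) : Prop :=
  (∀ x y, 0 ≤ d x y) ∧ (∀ x y, d x y = d y x) ∧ (∀ x, d x x = 0) ∧
    (∀ x y z, d x y ≤ d x z + d y z)

/-- Rank function of the instance `I*` (facilities `a,…,g` are `0,…,6`):
clients 1,2,3 rank c ≻ e ≻ b ≻ a ≻ f ≻ g ≻ d, clients 4,5,6 rank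
d ≻ g ≻ f ≻ a ≻ e ≻ b ≻ c, client 7 ranks b ≻ a ≻ f ≻ g ≻ e ≻ c ≻ d. -/
def rkStar (j : Fin 7) : Fin 7 → ℕ :=
  if j.val ≤ 2 then ![3, 2, 0, 6, 1, 4, 5]
  else if j.val ≤ 5 then ![3, 5, 6, 0, 4, 2, 1]
  else ![1, 0, 5, 6, 4, 2, 3]

/-- The preference profile `σ*` of the instance `I*`: `a ≽_j b` iff `a` has
(weakly) smaller rank than `b` in client `j`'s list. -/
def sigmaStar (j : Fin 7) (a b : Fin 7) : Prop := rkStar j a ≤ rkStar j b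

/-- `d` is consistent with the profile `σ`: whenever client `j` prefers `a` to `b`,
facility `a` is at least as close to `j` as `b`. -/
def Consistent (d : Pt → Pt → ℝ) (σ : Fin 7 → Fin 7 → Fin 7 → Prop) : Prop :=
  ∀ j a b, σ j a b → d (Sum.inr a) (Sum.inl j) ≤ d (Sum.inr b) (Sum.inl j)

/-- Expected social cost of the distribution `q` under metric `d`. -/
def cost (d : Pt → Pt → ℝ) (q : Fin 7 → ℝ) : ℝ :=
  ∑ i, q i * ∑ j, d (Sum.inr i) (Sum.inl j)

/-- Total cost of the clients if facility `o` is chosen. -/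
def facCost (d : Pt → Pt → ℝ) (o : Fin 7) : ℝ :=
  ∑ j, d (Sum.inr o) (Sum.inl j)

/-- Optimal (minimum) total cost over all facilities. -/
noncomputable def OPT (d : Pt → Pt → ℝ) : ℝ :=
  Finset.univ.inf' Finset.univ_nonempty (facCost d)

/-- The block graph for `d^f`, with the two weight-`2·M_f` edges subdivided by the
auxiliary vertices `7` and `8` (so that `M_f` times the unweighted graph distance
between blocks equals the weighted shortest-path distance of the paper).  Vertices:
`0 = {c,e}`, `1 = {a,b}`, `2 = {d,g}`, `3 = {f}`, `4 = B1 = {1,2,3}`,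
`5 = B2 = {4,5,6}`, `6 = {7}`; edges of weight `M_f`: f–B1, {c,e}–B1, {a,b}–B1,
B2–{d,g}, B2–f, {a,b}–7, 7–f; edges of weight `2·M_f` (subdivided through the
auxiliary vertices): {c,e}–{d,g} and {a,b}–{d,g}. -/
def graphF : SimpleGraph (Fin 9) :=
  SimpleGraph.fromRel (fun u v =>
    (u, v) ∈ ([(3, 4), (0, 4), (1, 4), (5, 2), (5, 3), (1, 6), (6, 3),
      (0, 7), (7, 2), (1, 8), (8, 2)] : List (Fin 9 × Fin 9)))

/-- The block of each point (clients 1,2,3 ↦ B1, clients 4,5,6 ↦ B2,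
client 7 ↦ {7}; facilities a,b ↦ {a,b}, c,e ↦ {c,e}, d,g ↦ {d,g}, f ↦ {f}). -/
def blkF : Pt → Fin 9
  | Sum.inl j => if j.val ≤ 2 then 4 else if j.val ≤ 5 then 5 else 6
  | Sum.inr i => ![1, 1, 0, 2, 0, 3, 2] i

/-- `d^f` is `M_f = 0.019343` times the graph distance between the blocks of the
two points in the subdivided block graph, i.e. the weighted shortest-path distance
between the blocks (points in the same block are at distance 0). -/
noncomputable def dF : Pt → Pt → ℝ :=
  fun x y => 0.019343 * (graphF.dist (blkF x) (blkF y) : ℝ)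

-- auxiliary material

instance : DecidableRel graphF.Adj := fun u v =>
  decidable_of_iff _ (SimpleGraph.fromRel_adj _ u v).symm

lemma graphF_connected : graphF.Connected := by
  rw [SimpleGraph.connected_iff]
  exact ⟨by decide, ⟨0⟩⟩

lemma walk_lb (p : Fin 9 → ℕ) (hp : ∀ u v : Fin 9, graphF.Adj u v → p v ≤ p u + 1) :
    ∀ {u v : Fin 9} (w : graphF.Walk u v), p v ≤ p u + w.length := by
  intro u v w
  induction w with
  | nil => simp
  | cons h w ih =>
      simp only [SimpleGraph.Walk.length_cons]
      have := hp _ _ h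
      omega

lemma dist_lb (p : Fin 9 → ℕ) (hp : ∀ u v : Fin 9, graphF.Adj u v → p v ≤ p u + 1)
    (u v : Fin 9) (hu : p u = 0) : p v ≤ graphF.dist u v := by
  obtain ⟨w, hw⟩ := graphF_connected.exists_walk_length_eq_dist u v
  have := walk_lb p hp w
  omega

def p4 : Fin 9 → ℕ := ![1, 1, 3, 1, 0, 2, 2, 2, 2]
def p5 : Fin 9 → ℕ := ![3, 3, 1, 1, 2, 0, 2, 2, 2]
def p6 : Fin 9 → ℕ := ![3, 1, 3, 1, 2, 2, 0, 4, 2]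

lemma hp4 : ∀ u v : Fin 9, graphF.Adj u v → p4 v ≤ p4 u + 1 := by decide
lemma hp5 : ∀ u v : Fin 9, graphF.Adj u v → p5 v ≤ p5 u + 1 := by decide
lemma hp6 : ∀ u v : Fin 9, graphF.Adj u v → p6 v ≤ p6 u + 1 := by decide

-- explicit walks for upper bounds
def Dval (j i : Fin 7) : ℕ :=
  if j.val ≤ 2 then ![1, 1, 1, 3, 1, 1, 3] i
  else if j.val ≤ 5 then ![3, 3, 3, 1, 3, 1, 1] i
  else ![1, 1, 3, 3, 3, 1, 3] i

def w40 : graphF.Walk 4 0 := .cons (by decide) .nil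
def w41 : graphF.Walk 4 1 := .cons (by decide) .nil
def w42 : graphF.Walk 4 2 := .cons (v := 0) (by decide) (.cons (v := 7) (by decide) (.cons (by decide) .nil))
def w43 : graphF.Walk 4 3 := .cons (by decide) .nil
def w50 : graphF.Walk 5 0 := .cons (v := 2) (by decide) (.cons (v := 7) (by decide) (.cons (by decide) .nil))
def w51 : graphF.Walk 5 1 := .cons (v := 2) (by decide) (.cons (v := 8) (by decide) (.cons (by decide) .nil))
def w52 : graphF.Walk 5 2 := .cons (by decide) .nil
def w53 : graphF.Walk 5 3 := .cons (by decide) .nil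
def w60 : graphF.Walk 6 0 := .cons (v := 1) (by decide) (.cons (v := 4) (by decide) (.cons (by decide) .nil))
def w61 : graphF.Walk 6 1 := .cons (by decide) .nil
def w62 : graphF.Walk 6 2 := .cons (v := 1) (by decide) (.cons (v := 8) (by decide) (.cons (by decide) .nil))
def w63 : graphF.Walk 6 3 := .cons (by decide) .nil

lemma dist_facts :
    graphF.dist 4 0 = 1 ∧ graphF.dist 4 1 = 1 ∧ graphF.dist 4 2 = 3 ∧ graphF.dist 4 3 = 1 ∧
    graphF.dist 5 0 = 3 ∧ graphF.dist 5 1 = 3 ∧ graphF.dist 5 2 = 1 ∧ graphF.dist 5 3 = 1 ∧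
    graphF.dist 6 0 = 3 ∧ graphF.dist 6 1 = 1 ∧ graphF.dist 6 2 = 3 ∧ graphF.dist 6 3 = 1 := by
  refine ⟨?_, ?_, ?_, ?_, ?_, ?_, ?_, ?_, ?_, ?_, ?_, ?_⟩
  · exact le_antisymm (graphF.dist_le w40) (dist_lb p4 hp4 4 0 (by decide))
  · exact le_antisymm (graphF.dist_le w41) (dist_lb p4 hp4 4 1 (by decide))
  · exact le_antisymm (graphF.dist_le w42) (dist_lb p4 hp4 4 2 (by decide))
  · exact le_antisymm (graphF.dist_le w43) (dist_lb p4 hp4 4 3 (by decide))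
  · exact le_antisymm (graphF.dist_le w50) (dist_lb p5 hp5 5 0 (by decide))
  · exact le_antisymm (graphF.dist_le w51) (dist_lb p5 hp5 5 1 (by decide))
  · exact le_antisymm (graphF.dist_le w52) (dist_lb p5 hp5 5 2 (by decide))
  · exact le_antisymm (graphF.dist_le w53) (dist_lb p5 hp5 5 3 (by decide))
  · exact le_antisymm (graphF.dist_le w60) (dist_lb p6 hp6 6 0 (by decide))
  · exact le_antisymm (graphF.dist_le w61) (dist_lb p6 hp6 6 1 (by decide))
  · exact le_antisymm (graphF.dist_le w62) (dist_lb p6 hp6 6 2 (by decide))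
  · exact le_antisymm (graphF.dist_le w63) (dist_lb p6 hp6 6 3 (by decide))

lemma dF_eq (j i : Fin 7) : dF (Sum.inr i) (Sum.inl j) = 0.019343 * (Dval j i : ℝ) := by
  obtain ⟨h1, h2, h3, h4, h5, h6, h7, h8, h9, h10, h11, h12⟩ := dist_facts
  have c1 : graphF.dist 0 4 = 1 := by rw [SimpleGraph.dist_comm]; exact h1
  have c2 : graphF.dist 1 4 = 1 := by rw [SimpleGraph.dist_comm]; exact h2
  have c3 : graphF.dist 2 4 = 3 := by rw [SimpleGraph.dist_comm]; exact h3
  have c4 : graphF.dist 3 4 = 1 := by rw [SimpleGraph.dist_comm]; exact h4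
  have c5 : graphF.dist 0 5 = 3 := by rw [SimpleGraph.dist_comm]; exact h5
  have c6 : graphF.dist 1 5 = 3 := by rw [SimpleGraph.dist_comm]; exact h6
  have c7 : graphF.dist 2 5 = 1 := by rw [SimpleGraph.dist_comm]; exact h7
  have c8 : graphF.dist 3 5 = 1 := by rw [SimpleGraph.dist_comm]; exact h8
  have c9 : graphF.dist 0 6 = 3 := by rw [SimpleGraph.dist_comm]; exact h9
  have c10 : graphF.dist 1 6 = 1 := by rw [SimpleGraph.dist_comm]; exact h10
  have c11 : graphF.dist 2 6 = 3 := by rw [SimpleGraph.dist_comm]; exact h11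
  have c12 : graphF.dist 3 6 = 1 := by rw [SimpleGraph.dist_comm]; exact h12
  have e1 : (![1, 1, 0, 2, 0, 3, 2] : Fin 7 → Fin 9) 5 = 3 := by decide
  have e2 : (![1, 1, 0, 2, 0, 3, 2] : Fin 7 → Fin 9) 6 = 2 := by decide
  have e3 : (![1, 1, 1, 3, 1, 1, 3] : Fin 7 → ℕ) 5 = 1 := by decide
  have e4 : (![1, 1, 1, 3, 1, 1, 3] : Fin 7 → ℕ) 6 = 3 := by decide
  have e5 : (![3, 3, 3, 1, 3, 1, 1] : Fin 7 → ℕ) 5 = 1 := by decide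
  have e6 : (![3, 3, 3, 1, 3, 1, 1] : Fin 7 → ℕ) 6 = 1 := by decide
  have e7 : (![1, 1, 3, 3, 3, 1, 3] : Fin 7 → ℕ) 5 = 1 := by decide
  have e8 : (![1, 1, 3, 3, 3, 1, 3] : Fin 7 → ℕ) 6 = 3 := by decide
  fin_cases j <;> fin_cases i <;>
    simp [dF, blkF, Dval, c1, c2, c3, c4, c5, c6, c7, c8, c9, c10, c11, c12,
      e1, e2, e3, e4, e5, e6, e7, e8]

lemma dval_mono : ∀ j a b : Fin 7, rkStar j a ≤ rkStar j b → Dval j a ≤ Dval j b := by decide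

lemma facCost_eq (o : Fin 7) :
    facCost dF o = 0.019343 * ((∑ j, Dval j o : ℕ) : ℝ) := by
  simp only [facCost, dF_eq, ← Finset.mul_sum, Nat.cast_sum]

/-- `d^f` is a pseudometric consistent with `σ*`, the total client cost
of facility `f` is `7 · M_f > 0`, and `f` minimizes the total client cost. -/
theorem dF_certificate :
    IsPseudometric dF ∧ Consistent dF sigmaStar ∧
      facCost dF 5 = 7 * 0.019343 ∧ 0 < facCost dF 5 ∧
      ∀ o : Fin 7, facCost dF 5 ≤ facCost dF o := by
  refine ⟨⟨?_, ?_, ?_, ?_⟩, ?_, ?_, ?_, ?_⟩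
  · intro x y; unfold dF; positivity
  · intro x y; unfold dF; rw [SimpleGraph.dist_comm]
  · intro x; unfold dF; simp
  · intro x y z
    have h := graphF_connected.dist_triangle (u := blkF x) (v := blkF z) (w := blkF y)
    rw [SimpleGraph.dist_comm (u := blkF z)] at h
    unfold dF
    rw [← mul_add]
    apply mul_le_mul_of_nonneg_left _ (by norm_num)
    exact_mod_cast h
  · intro j a b hab
    rw [dF_eq, dF_eq]
    apply mul_le_mul_of_nonneg_left _ (by norm_num)
    exact_mod_cast dval_mono j a b hab
  · rw [facCost_eq]
    norm_num [show (∑ j, Dval j 5) = 7 from by decide]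
    try ring
  · rw [facCost_eq]
    norm_num [show (∑ j, Dval j 5) = 7 from by decide]
  · intro o
    have hmin : ∀ o : Fin 7, (∑ j, Dval j 5) ≤ ∑ j, Dval j o := by decide
    rw [facCost_eq, facCost_eq]
    apply mul_le_mul_of_nonneg_left _ (by norm_num)
    exact_mod_cast hmin o
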